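/- Complex conjugation property of the quantum dilogarithm: conj(G_b(x)) = 1/G_b(Q − conj(x)) for every x ∈ ℂ away from poles and zeros; in particular |G_b(Q/2 + i x)| = 1 for every real x. -/

import Mathlib

noncomputable section

open Complex MeasureTheory Filter Real

/-- The integrand of the contour-integral defining the quantum dilogarithm:
`e^{πtz} / ((e^{πbt}−1)(e^{πb⁻¹t}−1) t)`. -/
def qdIntegrand (b : ℝ) (z t : ℂ) : ℂ :=
  Complex.exp (↑π * t * z) /
    ((Complex.exp (↑π * ↑b * t) - 1) * (Complex.exp (↑π * (↑b)⁻¹ * t) - 1) * t)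

/-- Radius of the small semicircle above `t = 0` (any sufficiently small radius
gives the same value; we fix one symmetric in `b ↔ b⁻¹`). -/
def qdRadius (b : ℝ) : ℝ := min b b⁻¹ / 2

/-- The contour integral `∫_Ω e^{πtz}/((e^{πbt}−1)(e^{πb⁻¹t}−1)) dt/t`, where
the contour `Ω` runs along `ℝ` from `−∞` to `+∞`, deformed by a small semicircle
passing above the singularity at `t = 0`. -/
def qdContour (b : ℝ) (z : ℂ) : ℂ :=
  (∫ t in Set.Iic (-(qdRadius b)), qdIntegrand b z (t : ℂ)) +
  (∫ t in Set.Ici (qdRadius b), qdIntegrand b z (t : ℂ)) -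
  Complex.I * ∫ θ in (0:ℝ)..π,
    qdIntegrand b z ((qdRadius b : ℂ) * Complex.exp (Complex.I * (θ : ℝ))) *
      ((qdRadius b : ℂ) * Complex.exp (Complex.I * (θ : ℝ)))

/-- `ζ_b = exp((πi/2)((b² + b^{-2})/6 + 1/2))`. -/
def zetab (b : ℝ) : ℂ :=
  Complex.exp (↑π * Complex.I / 2 * (((b : ℂ)^2 + ((b : ℂ)⁻¹)^2) / 6 + 1 / 2))

/-- `Q = b + b⁻¹`. -/
def Qb (b : ℝ) : ℝ := b + b⁻¹

/-- The quantum dilogarithm on the strip `0 < Re z < Q`: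
`G_b(z) = conj(ζ_b) · exp(−∫_Ω …)`. -/
def Gstrip (b : ℝ) (z : ℂ) : ℂ :=
  (starRingEnd ℂ) (zetab b) * Complex.exp (-qdContour b z)

/-- `G : ℂ → ℂ` is (a representative of) the meromorphic continuation of the
quantum dilogarithm `G_b`: it is meromorphic on all of `ℂ`, analytic away from
the lattice `{−nb − mb⁻¹ : n, m ∈ ℤ≥0}` of poles, and agrees with the
contour-integral formula on the strip `0 < Re z < Q`. -/
def IsGb (b : ℝ) (G : ℂ → ℂ) : Prop :=
  (∀ z : ℂ, MeromorphicAt G z) ∧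
  (∀ z : ℂ, (∀ n m : ℕ, z ≠ -(n : ℂ) * (b : ℂ) - (m : ℂ) * ((b : ℂ))⁻¹) →
    AnalyticAt ℂ G z) ∧
  (∀ z : ℂ, 0 < z.re → z.re < Qb b → G z = Gstrip b z)
open ComplexConjugate Topology

/-! On the strip `0 < Re z < Q` the relation `conj (G_b z) * G_b (Q - conj z) = 1` is read off
the contour integral: the integrand `f_z` satisfies `conj (f_z t) = -f_{Q - conj z} (-conj t)`,
the reflection `t ↦ -conj t` maps `Ω` onto itself reversing its orientation, and `|ζ_b| = 1`.
The function `y ↦ conj (G (conj y)) * G (Q - y)` is analytic off a countable set, whose complement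
in `ℂ` is connected, so the identity theorem extends the relation to every point where both
factors are analytic. On the line `Re z = Q/2` one has `Q - conj z = z`, whence `|G_b| = 1`. -/

lemma intervalIntegral.integral_conj {𝕜 : Type*} [RCLike 𝕜] {f : ℝ → 𝕜} {a b : ℝ} :
    ∫ x in a..b, conj (f x) = conj (∫ x in a..b, f x) := by
  simp only [intervalIntegral, _root_.integral_conj, map_sub]

lemma integral_comp_neg_Iic_neg {E : Type*} [NormedAddCommGroup E] [NormedSpace ℝ E]
    (r : ℝ) (f : ℝ → E) : ∫ t in Set.Iic (-r), f (-t) = ∫ t in Set.Ici r, f t := by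
  rw [integral_comp_neg_Iic, neg_neg, integral_Ici_eq_integral_Ioi]

lemma integral_Ici_comp_neg {E : Type*} [NormedAddCommGroup E] [NormedSpace ℝ E]
    (r : ℝ) (f : ℝ → E) : ∫ t in Set.Ici r, f (-t) = ∫ t in Set.Iic (-r), f t := by
  rw [integral_Ici_eq_integral_Ioi, integral_comp_neg_Ioi]

lemma conj_contourIntegral (r : ℝ) {f g : ℂ → ℂ} (hfg : ∀ t, conj (f t) = -g (-conj t)) :
    conj ((∫ t in Set.Iic (-r), f t) + (∫ t in Set.Ici r, f t) -
        I * ∫ θ in (0:ℝ)..π, f (r * exp (I * θ)) * (r * exp (I * θ))) =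
      -((∫ t in Set.Iic (-r), g t) + (∫ t in Set.Ici r, g t) -
        I * ∫ θ in (0:ℝ)..π, g (r * exp (I * θ)) * (r * exp (I * θ))) := by
  have hreal : ∀ t : ℝ, conj (f t) = -g ((-t : ℝ)) := fun t => by
    rw [hfg, conj_ofReal, ofReal_neg]
  have hleft : conj (∫ t in Set.Iic (-r), f t) = -∫ t in Set.Ici r, g t := by
    rw [← integral_conj, ← integral_comp_neg_Iic_neg r (fun t : ℝ => g t), ← integral_neg]
    simp only [hreal]
  have hright : conj (∫ t in Set.Ici r, f t) = -∫ t in Set.Iic (-r), g t := by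
    rw [← integral_conj, ← integral_Ici_comp_neg r (fun t : ℝ => g t), ← integral_neg]
    simp only [hreal]
  have harc : ∀ θ : ℝ, conj (f (r * exp (I * θ)) * (r * exp (I * θ))) =
      g (r * exp (I * ↑(π - θ))) * (r * exp (I * ↑(π - θ))) := fun θ => by
    have hrefl : r * exp (I * ↑(π - θ)) = -conj (r * exp (I * θ)) := by
      rw [map_mul, conj_ofReal, ← exp_conj, map_mul, conj_I, conj_ofReal, ofReal_sub,
        mul_sub, Complex.exp_sub, mul_comm I, exp_pi_mul_I, neg_mul, Complex.exp_neg]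
      ring
    rw [map_mul, hfg, hrefl]
    ring
  have hsemicircle : conj (∫ θ in (0:ℝ)..π, f (r * exp (I * θ)) * (r * exp (I * θ))) =
      ∫ θ in (0:ℝ)..π, g (r * exp (I * θ)) * (r * exp (I * θ)) := by
    rw [← intervalIntegral.integral_conj, intervalIntegral.integral_congr (fun θ _ => harc θ),
      intervalIntegral.integral_comp_sub_left (fun θ : ℝ => g (r * exp (I * θ)) * (r * exp (I * θ))),
      sub_self, sub_zero]
  rw [map_sub, map_add, map_mul, conj_I, hleft, hright, hsemicircle]
  ring

lemma conj_qdIntegrand (b : ℝ) (z t : ℂ) :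
    conj (qdIntegrand b z t) = qdIntegrand b (conj z) (conj t) := by
  simp only [qdIntegrand, map_div₀, map_mul, map_sub, map_one, ← exp_conj, conj_ofReal, map_inv₀]

/-- The reflection `t ↦ -t` exchanges `z` and `Q - z`: multiply numerator and denominator
by `e^{πQt} = e^{πbt} e^{πb⁻¹t}`. -/
lemma qdIntegrand_neg (b : ℝ) (z t : ℂ) :
    qdIntegrand b z (-t) = -qdIntegrand b (Qb b - z) t := by
  have hQ : ((Qb b : ℝ) : ℂ) = b + (b : ℂ)⁻¹ := by push_cast [Qb]; ring
  have hA : exp (π * b * -t) = (exp (π * b * t))⁻¹ := by rw [← Complex.exp_neg]; ring_nf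
  have hB : exp (π * (b : ℂ)⁻¹ * -t) = (exp (π * (b : ℂ)⁻¹ * t))⁻¹ := by
    rw [← Complex.exp_neg]; ring_nf
  have hnum : exp (π * t * (Qb b - z)) =
      exp (π * b * t) * exp (π * (b : ℂ)⁻¹ * t) * exp (π * -t * z) := by
    rw [← Complex.exp_add, ← Complex.exp_add, hQ]; ring_nf
  have hA0 := Complex.exp_ne_zero (π * b * t)
  have hB0 := Complex.exp_ne_zero (π * (b : ℂ)⁻¹ * t)
  rw [qdIntegrand, qdIntegrand, hA, hB, hnum]
  field_simp
  ring

lemma conj_qdContour (b : ℝ) (z : ℂ) :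
    conj (qdContour b z) = -qdContour b (Qb b - conj z) :=
  conj_contourIntegral _ fun t => by
    rw [conj_qdIntegrand, ← neg_neg (conj t), qdIntegrand_neg, neg_neg]

lemma conj_zetab_mul_self (b : ℝ) : conj (zetab b) * zetab b = 1 := by
  rw [zetab, ← exp_conj, ← Complex.exp_add]
  convert Complex.exp_zero using 2
  simp only [map_mul, map_div₀, map_add, map_pow, map_inv₀, map_one, map_ofNat, conj_ofReal,
    conj_I]
  ring

lemma conj_Gstrip_mul (b : ℝ) (z : ℂ) : conj (Gstrip b z) * Gstrip b (Qb b - conj z) = 1 := by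
  rw [Gstrip, Gstrip, map_mul, conj_conj, ← exp_conj, map_neg, conj_qdContour, neg_neg,
    mul_mul_mul_comm, ← Complex.exp_add, add_neg_cancel, Complex.exp_zero, mul_one,
    mul_comm, conj_zetab_mul_self]

lemma analyticAt_conj_comp_conj {f : ℂ → ℂ} {c : ℂ} (h : AnalyticAt ℂ f (conj c)) :
    AnalyticAt ℂ (conj ∘ f ∘ conj) c := by
  rw [analyticAt_iff_eventually_differentiableAt] at h ⊢
  filter_upwards [(Complex.continuous_conj.tendsto c).eventually h] with w hw
  exact differentiableAt_conj_conj_iff.2 hw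

theorem AnalyticOnNhd.eqOn_of_countable_compl {F : Type*} [NormedAddCommGroup F]
    [NormedSpace ℂ F] [CompleteSpace F] {f g : ℂ → F} {U : Set ℂ} (hU : Uᶜ.Countable)
    (hf : AnalyticOnNhd ℂ f U) (hg : AnalyticOnNhd ℂ g U) {z₀ : ℂ} (hz₀ : z₀ ∈ U)
    (hfg : f =ᶠ[𝓝 z₀] g) : Set.EqOn f g U := by
  have hconn := hU.isConnected_compl_of_one_lt_rank (rank_real_complex ▸ Nat.one_lt_ofNat)
  rw [compl_compl] at hconn
  exact hf.eqOn_of_preconnected_of_eventuallyEq hg hconn.isPreconnected hz₀ hfg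

lemma Qb_pos {b : ℝ} (hb : 0 < b) : 0 < Qb b := by
  unfold Qb; positivity

namespace IsGb

variable {b : ℝ} {G : ℂ → ℂ}

lemma analyticAt_of_re_pos (hb : 0 < b) (hG : IsGb b G) {z : ℂ} (hz : 0 < z.re) :
    AnalyticAt ℂ G z :=
  hG.2.1 z fun n m hnm => by
    have hre : z.re = -(n * b) - m * b⁻¹ := by simp [hnm]
    have : 0 ≤ (n : ℝ) * b := by positivity
    have : 0 ≤ (m : ℝ) * b⁻¹ := by positivity
    linarith

lemma countable_setOf_not_analyticAt (hG : IsGb b G) : {z | ¬AnalyticAt ℂ G z}.Countable :=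
  (Set.countable_range fun p : ℕ × ℕ => -(p.1 : ℂ) * b - p.2 * (b : ℂ)⁻¹).mono fun z hz =>
    not_forall_not.1 fun h => hz (hG.2.1 z fun n m hnm => h (n, m) hnm.symm)

lemma conj_mul_eq_one_of_mem_strip (hG : IsGb b G) {z : ℂ} (h0 : 0 < z.re) (hQ : z.re < Qb b) :
    conj (G z) * G (Qb b - conj z) = 1 := by
  have hre : (Qb b - conj z).re = Qb b - z.re := by simp
  rw [hG.2.2 z h0 hQ, hG.2.2 _ (by linarith) (by linarith)]
  exact conj_Gstrip_mul b z

lemma conj_mul_eq_one (hb : 0 < b) (hG : IsGb b G) {x : ℂ} (hx : AnalyticAt ℂ G x)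
    (hx' : AnalyticAt ℂ G (Qb b - conj x)) : conj (G x) * G (Qb b - conj x) = 1 := by
  set U := {y | AnalyticAt ℂ G (conj y) ∧ AnalyticAt ℂ G (Qb b - y)}
  have hU : Uᶜ.Countable := by
    have hS := hG.countable_setOf_not_analyticAt
    exact ((hS.preimage (starRingEnd ℂ).injective).union
      (hS.preimage (sub_right_injective (b := (Qb b : ℂ))))).mono fun y hy => not_and_or.1 hy
  set Ψ : ℂ → ℂ := fun y => conj (G (conj y)) * G (Qb b - y)
  have hΨ : AnalyticOnNhd ℂ Ψ U := fun y hy =>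
    (analyticAt_conj_comp_conj hy.1).mul (hy.2.comp (analyticAt_const.sub analyticAt_id))
  have hQ := Qb_pos hb
  set z₀ : ℂ := ((Qb b / 2 : ℝ) : ℂ)
  have hz₀ : z₀ ∈ U := by
    constructor <;> apply hG.analyticAt_of_re_pos hb <;>
      simp only [z₀, conj_re, sub_re, ofReal_re] <;> linarith
  have hstrip : IsOpen {y : ℂ | 0 < y.re ∧ y.re < Qb b} :=
    (isOpen_lt continuous_const continuous_re).inter (isOpen_lt continuous_re continuous_const)
  have hΨ₀ : Ψ =ᶠ[𝓝 z₀] fun _ => 1 := by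
    filter_upwards [hstrip.mem_nhds (by simp [z₀, hQ])] with y hy
    simpa using hG.conj_mul_eq_one_of_mem_strip (z := conj y) (by simpa using hy.1)
      (by simpa using hy.2)
  have hxU : conj x ∈ U := ⟨by rwa [conj_conj], hx'⟩
  simpa [Ψ] using hΨ.eqOn_of_countable_compl hU analyticOnNhd_const hz₀ hΨ₀ hxU

end IsGb

theorem Gb_complex_conjugation_general (b : ℝ) (hb0 : 0 < b) (G : ℂ → ℂ) (hG : IsGb b G) :
    (∀ x : ℂ, AnalyticAt ℂ G x → AnalyticAt ℂ G ((Qb b : ℂ) - (starRingEnd ℂ) x) →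
      G x ≠ 0 → G ((Qb b : ℂ) - (starRingEnd ℂ) x) ≠ 0 →
      (starRingEnd ℂ) (G x) = (G ((Qb b : ℂ) - (starRingEnd ℂ) x))⁻¹) ∧
    (∀ x : ℝ, ‖G ((Qb b : ℂ) / 2 + Complex.I * (x : ℂ))‖ = 1) := by
  refine ⟨fun x hx hx' _ _ => eq_inv_of_mul_eq_one_left (hG.conj_mul_eq_one hb0 hx hx'),
    fun x => ?_⟩
  set p : ℂ := Qb b / 2 + I * x
  have hQ := Qb_pos hb0
  have hp : Qb b - conj p = p := by
    simp only [p, map_add, map_mul, map_div₀, conj_ofReal, conj_I, map_ofNat]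
    ring
  have hpG : AnalyticAt ℂ G p := hG.analyticAt_of_re_pos hb0 (by simp [p, hQ])
  have h := hG.conj_mul_eq_one hb0 hpG (by rwa [hp])
  rw [hp, conj_mul'] at h
  exact (pow_eq_one_iff_of_nonneg (norm_nonneg _) two_ne_zero).1 (by exact_mod_cast h)

/-- Complex conjugation property of the quantum dilogarithm:
`conj(G_b(x)) = 1/G_b(Q − conj(x))` away from poles and zeros; in particular
`|G_b(Q/2 + ix)| = 1` for every real `x`. -/
theorem Gb_complex_conjugation (b : ℝ) (hb0 : 0 < b) (hb1 : b < 1)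
    (hirr : Irrational (b ^ 2)) (G : ℂ → ℂ) (hG : IsGb b G) :
    (∀ x : ℂ, AnalyticAt ℂ G x → AnalyticAt ℂ G ((Qb b : ℂ) - (starRingEnd ℂ) x) →
      G x ≠ 0 → G ((Qb b : ℂ) - (starRingEnd ℂ) x) ≠ 0 →
      (starRingEnd ℂ) (G x) = (G ((Qb b : ℂ) - (starRingEnd ℂ) x))⁻¹) ∧
    (∀ x : ℝ, ‖G ((Qb b : ℂ) / 2 + Complex.I * (x : ℂ))‖ = 1) :=
  Gb_complex_conjugation_general b hb0 G hG

end
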